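/- arXiv:1505.04229 — 4 statements merged into one kernel-verified Lean document; each statement's English description precedes it below -/
import Mathlib

section
/- For any bay configuration B, if a container r that is blocking the current target container is relocated to column c_i, then the number of blocking containers in the resulting bay B' satisfies S_0(B') = S_0(B) - 1 if r is smaller than the minimum container index in c_i, and S_0(B') = S_0(B) otherwise. Consequently, S_0(B') >= S_0(B) - 1. -/
/-!
Only the source column `c` and the target column `i` change. Removing `r` from the top of `c`
removes exactly one blocking container, because `t < r` lies below it. Placing `r` on top of `i`
creates a blocking container exactly when `i` holds a label `≤ r`; as labels are distinct, this
means one smaller than `r`.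
-/

abbrev Bay (C : ℕ) := Fin C → List ℕ

def S0col : List ℕ → ℕ
  | [] => 0
  | a :: rest => (if rest.any (fun b => decide (b < a)) then 1 else 0) + S0col rest

def S0 {C : ℕ} (B : Bay C) : ℕ := ∑ i : Fin C, S0col (B i)

def bayMem {C : ℕ} (x : ℕ) (B : Bay C) : Prop := ∃ i, x ∈ B i

theorem S0col_cons (a : ℕ) (l : List ℕ) :
    S0col (a :: l) = (if ∃ b ∈ l, b < a then 1 else 0) + S0col l := by
  simp [S0col]

theorem S0_update_add {C : ℕ} (B : Bay C) (j : Fin C) (l : List ℕ) :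
    S0 (Function.update B j l) + S0col (B j) = S0 B + S0col l := by
  have hj := Finset.mem_univ j
  rw [S0, S0, ← Finset.add_sum_erase _ (fun k => S0col (Function.update B j l k)) hj,
    ← Finset.add_sum_erase _ (fun k => S0col (B k)) hj, Function.update_self,
    Finset.sum_congr rfl fun k hk => by rw [Function.update_of_ne (Finset.ne_of_mem_erase hk)]]
  ring

theorem Bay.disjoint_of_nodup {C : ℕ} {B : Bay C} (h : ((List.finRange C).flatMap B).Nodup)
    {i j : Fin C} (hij : i ≠ j) : (B i).Disjoint (B j) := by
  have : Std.Symm (Function.onFun List.Disjoint B) := ⟨fun _ _ h => h.symm⟩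
  exact (List.nodup_flatMap.1 h).2.forall (List.mem_finRange i) (List.mem_finRange j) hij

theorem stmt0_general {C : ℕ} (B : Bay C) (c i : Fin C) (hic : i ≠ c) (r : ℕ) (rest : List ℕ)
    (hc : B c = r :: rest)
    (t : ℕ) (ht : t ∈ rest) (htr : t < r)
    (hnodup : ((List.finRange C).flatMap B).Nodup)
    (B' : Bay C)
    (hB' : B' = fun j => if j = c then rest else if j = i then r :: B j else B j) :
    (S0 B' = if ∀ b ∈ B i, r < b then S0 B - 1 else S0 B) ∧ S0 B ≤ S0 B' + 1 := by
  have hB'_update : B' = Function.update (Function.update B c rest) i (r :: B i) := by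
    subst hB'
    funext j
    simp only [Function.update_apply]
    split_ifs <;> simp_all
  have hsum : S0 B' + 1 + S0col (B i) = S0 B + S0col (r :: B i) := by
    have hc_col : S0col (B c) = 1 + S0col rest := by rw [hc, S0col_cons, if_pos ⟨t, ht, htr⟩]
    have hmove_out := S0_update_add B c rest
    have hmove_in := S0_update_add (Function.update B c rest) i (r :: B i)
    rw [Function.update_of_ne hic] at hmove_in
    rw [hB'_update]
    omega
  have hr : r ∉ B i := fun hr => Bay.disjoint_of_nodup hnodup hic hr (hc ▸ List.mem_cons_self)
  have hS0' : S0 B' = if ∀ b ∈ B i, r < b then S0 B - 1 else S0 B := by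
    split_ifs with hmin
    · rw [S0col_cons, if_neg fun ⟨b, hb, hbr⟩ => (hmin b hb).asymm hbr] at hsum
      omega
    · push Not at hmin
      obtain ⟨b, hb, hbr⟩ := hmin
      rw [S0col_cons, if_pos ⟨b, hb, hbr.lt_of_ne (ne_of_mem_of_not_mem hb hr)⟩] at hsum
      omega
  exact ⟨hS0', by split_ifs at hS0' <;> omega⟩

/-- relocating the topmost blocking container `r` (which lies above the
target `t`, the smallest container of the bay) from column `c` to column `i` decreases
the number of blocking containers `S0` by one exactly when `r` is smaller than the
minimum of column `i` (an empty column counts as having infinite minimum), and leaves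
it unchanged otherwise.  Consequently `S0 B' ≥ S0 B - 1`. -/
theorem stmt0 {C : ℕ} (B : Bay C) (c i : Fin C) (hic : i ≠ c) (r : ℕ) (rest : List ℕ)
    (hc : B c = r :: rest)
    (t : ℕ) (ht : t ∈ rest) (htmin : ∀ x, bayMem x B → t ≤ x) (htr : t < r)
    (hnodup : ((List.finRange C).flatMap B).Nodup)
    (B' : Bay C)
    (hB' : B' = fun j => if j = c then rest else if j = i then r :: B j else B j) :
    (S0 B' = if ∀ b ∈ B i, r < b then S0 B - 1 else S0 B) ∧ S0 B ≤ S0 B' + 1 :=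
  stmt0_general B c i hic r rest hc t ht htr hnodup B' hB'
end

section
/- For a bay with C+1 >= h+2 columns and h containers per column filled by a uniformly random permutation of {1,...,h(C+1)}, the probability that a fixed column is 'special' (all its containers have labels >= (h-1)(C+1)+1) is (C+1)C(C-1)...(C-h+2) / (h(C+1))(h(C+1)-1)...(h(C+1)-h+1), and this probability is at least (2/(h(h+1)))^h. -/
/-!
Column `i` is special exactly when the permutation maps the `h` slots of the column into the
`C + 1` slots carrying large labels. Permutations act transitively on the injections of the
column, and every fibre of the orbit map is a coset of one stabilizer, so the probability is the
proportion of injections landing in the large labels: `(C+1)_h / (h(C+1))_h` in falling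
factorials. For the bound, each factor `(C+1-j) / (h(C+1)-j)` is at least `(C+2-h) / (h(C+1))`,
and `(C+2-h)(h+1) ≥ 2(C+1)` amounts to `(h-1)(C-h) ≥ 0`.
-/

open Classical in
/-- Probability (over a uniformly random permutation of the `h*(C+1)` slots, i.e. a
uniformly random bay with `C+1` columns of `h` containers with labels `π(slot)+1`)
that the fixed column `i` is "special", i.e. all its containers have labels at least
`ω = (h-1)(C+1)+1`. -/
noncomputable def specialProb (h C : ℕ) (i : Fin (C + 1)) : ℚ :=
  ((Finset.univ.filter (fun π : Equiv.Perm (Fin (h * (C + 1))) =>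
      ∀ j : Fin (h * (C + 1)), (j : ℕ) / h = (i : ℕ) →
        (h - 1) * (C + 1) + 1 ≤ (π j : ℕ) + 1)).card : ℚ) /
    (Nat.factorial (h * (C + 1)) : ℚ)

open Finset
open scoped Nat

theorem MulAction.card_filter_smul_mul_card {G X : Type*} [Group G] [MulAction G X]
    [MulAction.IsPretransitive G X] [Fintype G] [Fintype X] (x : X) (P : X → Prop)
    [DecidablePred P] :
    #{g : G | P (g • x)} * Fintype.card X = #{y | P y} * Fintype.card G := by
  classical
  let e : G ≃ X × stabilizer G x :=
    (orbitProdStabilizerEquivGroup G x).symm.trans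
      ((Equiv.subtypeUnivEquiv fun y => mem_orbit_iff.mpr (exists_smul_eq G x y)).prodCongr
        (Equiv.refl _))
  have he : ∀ g, (e g).1 = g • x := fun _ => rfl
  have hfilter : #{g : G | P (g • x)} = #{y | P y} * Fintype.card (stabilizer G x) := by
    rw [← card_univ, ← card_product, ← filter_product_left, univ_product_univ]
    exact card_equiv e fun g => by simp [he]
  rw [hfilter, Fintype.card_congr e, Fintype.card_prod]
  ring

instance Equiv.Perm.isPretransitive_embedding {ι α : Type*} [Finite ι] :
    MulAction.IsPretransitive (Perm α) (ι ↪ α) :=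
  ⟨fun f g => (Perm.exists_extending_pair f g f.injective g.injective).imp
    fun _ hσ => Function.Embedding.ext hσ⟩

def Function.Embedding.subtypeEquivCodRestrict {α β : Type*} (p : β → Prop) :
    {f : α ↪ β // ∀ a, p (f a)} ≃ (α ↪ Subtype p) where
  toFun f := ⟨fun a => ⟨f.1 a, f.2 a⟩, fun _ _ hab => f.1.injective (congrArg Subtype.val hab)⟩
  invFun f := ⟨f.trans (Function.Embedding.subtype p), fun a => (f a).2⟩
  left_inv _ := rfl
  right_inv _ := rfl

theorem Equiv.Perm.card_filter_mapsTo_mul_descFactorial {α : Type*} [Fintype α] [DecidableEq α]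
    (A B : Finset α) :
    #{σ : Perm α | ∀ a ∈ A, σ a ∈ B} * (Fintype.card α).descFactorial #A
      = (#B).descFactorial #A * (Fintype.card α)! := by
  have key := MulAction.card_filter_smul_mul_card (G := Perm α)
    (Function.Embedding.subtype (· ∈ A)) (fun f => ∀ a, f a ∈ B)
  rw [Fintype.card_embedding_eq, Fintype.card_coe, Fintype.card_perm] at key
  convert key using 2
  · simp
  · rw [← Fintype.card_subtype, Fintype.card_congr (Function.Embedding.subtypeEquivCodRestrict _),
      Fintype.card_embedding_eq, Fintype.card_coe, Fintype.card_coe]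

theorem Nat.cast_descFactorial_eq_prod_range {R : Type*} [CommRing R] (n k : ℕ) :
    (n.descFactorial k : R) = ∏ j ∈ range k, ((n : R) - j) := by
  rw [← descPochhammer_eval_eq_descFactorial, descPochhammer_eval_eq_prod_range]

theorem Fin.card_filter_val_eq_card_filter_range {n : ℕ} (p : ℕ → Prop) [DecidablePred p] :
    #{i : Fin n | p i} = #{x ∈ range n | p x} := by
  rw [← card_map Fin.valEmbedding, map_filter', Fin.map_valEmbedding_univ, ← Nat.Iio_eq_range]
  congr 1
  refine filter_congr fun x hx => ⟨?_, fun hp => ⟨⟨x, mem_Iio.mp hx⟩, hp, rfl⟩⟩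
  rintro ⟨a, ha, rfl⟩
  exact ha

theorem Fin.card_filter_le_val (n k : ℕ) : #{i : Fin n | k ≤ (i : ℕ)} = n - k := by
  have := card_filter_add_card_filter_not (s := univ) (p := fun i : Fin n => (i : ℕ) < k)
  simp only [Fin.card_filter_val_lt, not_lt, card_univ, Fintype.card_fin] at this
  omega

theorem Nat.filter_range_mul_div_eq {h m i : ℕ} (hi : i < m) :
    {x ∈ range (h * m) | x / h = i} = Ico (h * i) (h * i + h) := by
  ext x
  simp only [mem_filter, mem_range, mem_Ico]
  rcases Nat.eq_zero_or_pos h with rfl | hh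
  · simp
  constructor
  · rintro ⟨-, rfl⟩
    exact ⟨Nat.mul_div_le x h, by simpa [Nat.mul_succ] using Nat.lt_mul_div_succ x hh⟩
  · rintro ⟨hlo, hhi⟩
    refine ⟨hhi.trans_le ?_, Nat.div_eq_of_lt_le (by linarith) (by linarith)⟩
    nlinarith

theorem Fin.card_filter_val_div_eq {h m i : ℕ} (hi : i < m) :
    #{j : Fin (h * m) | (j : ℕ) / h = i} = h := by
  rw [Fin.card_filter_val_eq_card_filter_range (· / h = i), Nat.filter_range_mul_div_eq hi,
    Nat.card_Ico, Nat.add_sub_cancel_left]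

theorem specialProb_eq_descFactorial_div (h C : ℕ) (i : Fin (C + 1)) :
    specialProb h C i
      = ((h * (C + 1) - (h - 1) * (C + 1)).descFactorial h : ℚ)
          / (h * (C + 1)).descFactorial h := by
  classical
  set column : Finset (Fin (h * (C + 1))) := {j | (j : ℕ) / h = i}
  set large : Finset (Fin (h * (C + 1))) := {v | (h - 1) * (C + 1) ≤ (v : ℕ)}
  have hcount := Equiv.Perm.card_filter_mapsTo_mul_descFactorial column large
  rw [Fintype.card_fin, Fin.card_filter_val_div_eq i.2, Fin.card_filter_le_val] at hcount
  have hpos : 0 < (h * (C + 1)).descFactorial h :=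
    Nat.descFactorial_pos.mpr (Nat.le_mul_of_pos_right h C.succ_pos)
  unfold specialProb
  rw [div_eq_div_iff (by positivity) (by positivity)]
  convert congrArg (Nat.cast : ℕ → ℚ) hcount using 1 <;> push_cast
  · congr 3
    ext π
    simp [column, large]
  · ring

theorem two_div_le_sub_div_sub {K : Type*} [Field K] [LinearOrder K] [IsStrictOrderedRing K]
    {h c j : K} (hj : 0 ≤ j) (hjh : j + 1 ≤ h) (hhc : h + 1 ≤ c) :
    2 / (h * (h + 1)) ≤ (c - j) / (h * c - j) := by
  have hh : 1 ≤ h := by linarith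
  have hj_lt : j < h * c := by nlinarith
  calc 2 / (h * (h + 1)) ≤ (c + 1 - h) / (h * c) := by
        rw [div_le_div_iff₀ (by positivity) (by linarith)]
        nlinarith [mul_nonneg (sub_nonneg.mpr hh) (by linarith : (0 : K) ≤ c - h - 1)]
    _ ≤ (c - j) / (h * c) := div_le_div_of_nonneg_right (by linarith) (by linarith)
    _ ≤ (c - j) / (h * c - j) :=
        div_le_div_of_nonneg_left (by linarith) (by linarith) (by linarith)

theorem stmt12_general (h C : ℕ) (hC : h + 1 ≤ C) (i : Fin (C + 1)) :
    specialProb h C i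
        = (∏ j ∈ Finset.range h, ((C : ℚ) + 1 - (j : ℚ))) /
          (∏ j ∈ Finset.range h, ((h : ℚ) * ((C : ℚ) + 1) - (j : ℚ))) ∧
      (2 / ((h : ℚ) * ((h : ℚ) + 1))) ^ h ≤ specialProb h C i := by
  have hnum : ((h * (C + 1) - (h - 1) * (C + 1)).descFactorial h : ℚ)
      = ∏ j ∈ range h, ((C : ℚ) + 1 - j) := by
    rw [Nat.cast_descFactorial_eq_prod_range]
    refine prod_congr rfl fun j hj => ?_
    have hpos : 0 < h := (mem_range.mp hj).trans_le' (Nat.zero_le j)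
    rw [Nat.sub_one_mul, Nat.sub_sub_self (Nat.le_mul_of_pos_left _ hpos)]
    push_cast
    ring
  have hformula : specialProb h C i
      = (∏ j ∈ range h, ((C : ℚ) + 1 - j)) / ∏ j ∈ range h, ((h : ℚ) * ((C : ℚ) + 1) - j) := by
    rw [specialProb_eq_descFactorial_div, hnum, Nat.cast_descFactorial_eq_prod_range]
    push_cast
    rfl
  refine ⟨hformula, ?_⟩
  calc (2 / ((h : ℚ) * ((h : ℚ) + 1))) ^ h = ∏ _j ∈ range h, 2 / ((h : ℚ) * ((h : ℚ) + 1)) := by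
        rw [prod_const, card_range]
    _ ≤ ∏ j ∈ range h, ((C : ℚ) + 1 - j) / ((h : ℚ) * ((C : ℚ) + 1) - j) :=
        prod_le_prod (fun _ _ => by positivity) fun j hj =>
          two_div_le_sub_div_sub (Nat.cast_nonneg j) (by exact_mod_cast mem_range.mp hj)
            (by exact_mod_cast hC.trans C.le_succ)
    _ = specialProb h C i := by rw [hformula, prod_div_distrib]

/-- the probability that a fixed column is special equals
`(C+1)·C·…·(C-h+2) / ((h(C+1))·(h(C+1)-1)·…·(h(C+1)-h+1))`, and is at least
`(2/(h(h+1)))^h`, provided `C + 1 ≥ h + 2`. -/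
theorem stmt12 (h C : ℕ) (hh : 1 ≤ h) (hC : h + 1 ≤ C) (i : Fin (C + 1)) :
    specialProb h C i
        = (∏ j ∈ Finset.range h, ((C : ℚ) + 1 - (j : ℚ))) /
          (∏ j ∈ Finset.range h, ((h : ℚ) * ((C : ℚ) + 1) - (j : ℚ))) ∧
      (2 / ((h : ℚ) * ((h : ℚ) + 1))) ^ h ≤ specialProb h C i :=
  stmt12_general h C hC i
end

section
/- For a uniformly random bay with C+1 columns and h containers per column, the probability that no column is 'special' is at most exp(-theta (C+1)), where theta = (1/(8h)) * (2/(h(h+1)))^{2h}, provided C >= h+1. -/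
/-!
The slots holding the `C + 1` largest labels form a uniformly random `(C + 1)`-subset `S` of the
`h (C + 1)` slots, and a column is special iff it lies inside `S`. Let `A k` be the family of
`(C + 1)`-sets containing none of the first `k` columns and `w = h (h + 1) / 2`. Exchanging the
`s` slots of column `k` missing from `S` against `s` slots of `S` off that column and double
counting shows that the members of `A (k + 1)` missing exactly `s` slots of column `k` are at most
`C(h, s) (w - 1)ˢ` times as many as the members of `A k` containing column `k`; summing over `s`
gives `#A (k + 1) ≤ (1 - w⁻ʰ) #A k`. Hence the probability is at most
`(1 - w⁻ʰ)^(C+1) ≤ exp (-(C + 1) w⁻ʰ)`, and `θ ≤ w⁻ʰ`.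
-/

open Classical in
/-- Probability (over a uniformly random permutation of the `h*(C+1)` slots, i.e. a
uniformly random bay with `C+1` columns of `h` containers with labels `π(slot)+1`)
that no column is "special" (a column is special if all its containers have labels
at least `ω = (h-1)(C+1)+1`). -/
noncomputable def noSpecialProb (h C : ℕ) : ℝ :=
  ((Finset.univ.filter (fun π : Equiv.Perm (Fin (h * (C + 1))) =>
      ∀ i : Fin (C + 1), ¬ ∀ j : Fin (h * (C + 1)), (j : ℕ) / h = (i : ℕ) →
        (h - 1) * (C + 1) + 1 ≤ (π j : ℕ) + 1)).card : ℝ) /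
    (Nat.factorial (h * (C + 1)) : ℝ)

open Finset
open scoped Pointwise

theorem Nat.descFactorial_le_pow_mul_descFactorial {a b x : ℕ} :
    ∀ s, a ≤ x * (b + 1 - s) → a.descFactorial s ≤ x ^ s * b.descFactorial s
  | 0, _ => by simp
  | s + 1, hab => by
    have hs : a ≤ x * (b + 1 - s) := hab.trans (Nat.mul_le_mul_left x (by omega))
    have hsub : a - s ≤ x * (b - s) := (Nat.sub_le a s).trans (hab.trans_eq (by congr 1; omega))
    calc a.descFactorial (s + 1) = (a - s) * a.descFactorial s := Nat.descFactorial_succ a s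
      _ ≤ x * (b - s) * (x ^ s * b.descFactorial s) :=
        Nat.mul_le_mul hsub (descFactorial_le_pow_mul_descFactorial s hs)
      _ = x ^ (s + 1) * b.descFactorial (s + 1) := by
        rw [Nat.descFactorial_succ, pow_succ]; ring

theorem Nat.choose_le_pow_mul_choose {a b x s : ℕ} (hab : a ≤ x * (b + 1 - s)) :
    a.choose s ≤ x ^ s * b.choose s := by
  have h := descFactorial_le_pow_mul_descFactorial s hab
  rw [descFactorial_eq_factorial_mul_choose, descFactorial_eq_factorial_mul_choose,
    mul_left_comm] at h
  exact Nat.le_of_mul_le_mul_left h s.factorial_pos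

theorem Nat.sum_range_choose_succ_mul_pow_add_one (x h : ℕ) :
    ∑ s ∈ range h, h.choose (s + 1) * x ^ (s + 1) + 1 = (x + 1) ^ h := by
  rw [add_pow, sum_range_succ']
  simp [mul_comm]

theorem Finset.card_mul_choose_le_of_exchange {α : Type*} [Fintype α] [DecidableEq α]
    {K : Finset α} {𝒜 ℬ : Finset (Finset α)} {m r s : ℕ}
    (h𝒜 : ∀ S ∈ 𝒜, #(S \ K) = r ∧ #(K \ S) = s) (hℬ : ∀ S ∈ ℬ, #S = m)
    (hexchange : ∀ S ∈ 𝒜, ∀ R ⊆ S \ K, #R = s → S \ R ∪ (K \ S) ∈ ℬ) :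
    #𝒜 * r.choose s ≤ #ℬ * ((#K).choose s * (Fintype.card α - m).choose s) := by
  have hsource : #(𝒜.sigma fun S => powersetCard s (S \ K)) = #𝒜 * r.choose s := by
    rw [card_sigma, ← smul_eq_mul, ← sum_const]
    exact sum_congr rfl fun S hS => by rw [card_powersetCard, (h𝒜 S hS).1]
  have htarget : #(ℬ.sigma fun S' => powersetCard s K ×ˢ powersetCard s (univ \ S')) =
      #ℬ * ((#K).choose s * (Fintype.card α - m).choose s) := by
    rw [card_sigma, ← smul_eq_mul, ← sum_const]
    refine sum_congr rfl fun S' hS' => ?_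
    rw [card_product, card_powersetCard, card_powersetCard, card_univ_sdiff, hℬ S' hS']
  rw [← hsource, ← htarget]
  -- `S` is recovered from its image `S'` as `(S' \ (K \ S)) ∪ R`.
  refine card_le_card_of_injOn (fun p => ⟨p.1 \ p.2 ∪ (K \ p.1), (K \ p.1, p.2)⟩) ?_ ?_
  · rintro ⟨S, R⟩ hp
    simp only [coe_sigma, Set.mem_sigma_iff, mem_coe, mem_powersetCard] at hp
    obtain ⟨hS, hRsub, hRcard⟩ := hp
    simp only [coe_sigma, Set.mem_sigma_iff, mem_coe, mem_product, mem_powersetCard]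
    refine ⟨hexchange S hS R hRsub hRcard, ⟨sdiff_subset, (h𝒜 S hS).2⟩, ?_, hRcard⟩
    intro a ha
    have := hRsub ha
    simp_all
  · rintro ⟨S₁, R₁⟩ hp₁ ⟨S₂, R₂⟩ hp₂ heq
    simp only [coe_sigma, Set.mem_sigma_iff, mem_coe, mem_powersetCard] at hp₁ hp₂
    simp only [Sigma.mk.injEq, Prod.mk.injEq, heq_eq_eq] at heq
    obtain ⟨hS', hKS, rfl⟩ := heq
    have recover : ∀ S R, R ⊆ S \ K → (S \ R ∪ (K \ S)) \ (K \ S) ∪ R = S := by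
      intro S R hR
      ext a
      have := @hR a
      by_cases a ∈ S <;> by_cases a ∈ R <;> by_cases a ∈ K <;> simp_all
    rw [← recover S₁ R₁ hp₁.2.1, ← recover S₂ R₁ hp₂.2.1, hS', hKS]

theorem Equiv.Perm.exists_smul_finset_eq {α : Type*} [DecidableEq α] {s t : Finset α}
    (hst : #s = #t) : ∃ g : Equiv.Perm α, g • s = t := by
  have := Set.powersetCard.isPretransitive (α := α) (n := #t)
  obtain ⟨g, hg⟩ := MulAction.exists_smul_eq (Equiv.Perm α)
    (⟨s, hst⟩ : Set.powersetCard α #t) ⟨t, rfl⟩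
  exact ⟨g, by simpa using congrArg Subtype.val hg⟩

section PermCount

variable {α : Type*} [Fintype α] [DecidableEq α]

theorem Equiv.Perm.card_filter_inv_smul_finset_eq_congr (T : Finset α) {s t : Finset α}
    (hst : #s = #t) :
    #{π : Equiv.Perm α | π⁻¹ • T = s} = #{π : Equiv.Perm α | π⁻¹ • T = t} := by
  obtain ⟨g, hg⟩ := exists_smul_finset_eq hst
  refine card_bij' (fun π _ => π * g⁻¹) (fun π _ => π * g) ?_ ?_ ?_ ?_
  · intro π hπ
    simp only [mem_filter, mem_univ, true_and] at hπ ⊢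
    rw [mul_inv_rev, inv_inv, mul_smul, hπ, hg]
  · intro π hπ
    simp only [mem_filter, mem_univ, true_and] at hπ ⊢
    rw [mul_inv_rev, mul_smul, hπ, ← hg, inv_smul_smul]
  · simp
  · simp

theorem Equiv.Perm.card_filter_inv_smul_finset_mul_choose (T : Finset α)
    (P : Finset α → Prop) [DecidablePred P] :
    #{π : Equiv.Perm α | P (π⁻¹ • T)} * (Fintype.card α).choose #T =
      #{S ∈ powersetCard #T univ | P S} * (Fintype.card α).factorial := by
  have hfiber : ∀ Q : Finset α → Prop, [DecidablePred Q] →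
      #{π : Equiv.Perm α | Q (π⁻¹ • T)} =
        #{S ∈ powersetCard #T univ | Q S} * #{π : Equiv.Perm α | π⁻¹ • T = T} := by
    intro Q _
    rw [card_eq_sum_card_fiberwise (f := fun π : Equiv.Perm α => π⁻¹ • T)
      (t := {S ∈ powersetCard #T univ | Q S}) (by intro π hπ; simp_all [card_smul_finset]),
      ← smul_eq_mul, ← sum_const]
    refine sum_congr rfl fun S hS => ?_
    simp only [mem_filter, mem_powersetCard] at hS
    rw [card_filter_inv_smul_finset_eq_congr T hS.1.2.symm]
    congr 1
    ext π
    simp only [mem_filter, mem_univ, true_and]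
    exact ⟨fun h => h.2, fun h => ⟨h ▸ hS.2, h⟩⟩
  have htotal := hfiber (fun _ => True)
  simp only [filter_true, card_univ, Fintype.card_perm, card_powersetCard] at htotal
  rw [hfiber P, htotal]
  ring

end PermCount

namespace Bay

variable (h n : ℕ)

def column (i : ℕ) : Finset (Fin (h * n)) := {j | (j : ℕ) / h = i}

def topLabels : Finset (Fin (h * n)) := {v | (h - 1) * n ≤ (v : ℕ)}

def avoiding (k : ℕ) : Finset (Finset (Fin (h * n))) :=
  {S ∈ powersetCard n univ | ∀ i < k, ¬ column h n i ⊆ S}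

variable {h n}

theorem mem_column {i : ℕ} {j : Fin (h * n)} : j ∈ column h n i ↔ (j : ℕ) / h = i := by
  simp [column]

theorem card_column (hh : 0 < h) {i : ℕ} (hi : i < n) : #(column h n i) = h := by
  have hcol : column h n i =
      univ.filter (fun j : Fin (h * n) => j < (i + 1) * h) \ univ.filter (fun j => j < i * h) := by
    ext j
    simp only [mem_column, mem_sdiff, mem_filter, mem_univ, true_and, not_lt]
    rw [← Nat.le_div_iff_mul_le hh, ← Nat.div_lt_iff_lt_mul hh]
    omega
  have hmono : i * h ≤ (i + 1) * h := Nat.mul_le_mul_right h (Nat.le_succ i)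
  have hle : (i + 1) * h ≤ h * n := by rw [mul_comm h]; exact Nat.mul_le_mul_right h hi
  rw [hcol, card_sdiff_of_subset (monotone_filter_right _ fun _ _ hj => lt_of_lt_of_le hj hmono),
    Fin.card_filter_val_lt, Fin.card_filter_val_lt, min_eq_right hle,
    min_eq_right (hmono.trans hle), Nat.succ_mul, Nat.add_sub_cancel_left]

theorem disjoint_column {i k : ℕ} (hik : i ≠ k) : Disjoint (column h n i) (column h n k) :=
  disjoint_left.mpr fun _ hi hk => hik ((mem_column.mp hi).symm.trans (mem_column.mp hk))

theorem card_topLabels (hh : 0 < h) : #(topLabels h n) = n := by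
  have hsplit := card_filter_add_card_filter_not (s := (univ : Finset (Fin (h * n))))
    fun v => (v : ℕ) < (h - 1) * n
  simp only [not_lt, card_univ, Fintype.card_fin, Fin.card_filter_val_lt] at hsplit
  have hsum : (h - 1) * n + n = h * n := by
    rw [Nat.sub_one_mul]; exact Nat.sub_add_cancel (Nat.le_mul_of_pos_left n hh)
  rw [min_eq_right (by omega)] at hsplit
  rw [topLabels]
  omega

theorem avoiding_zero : avoiding h n 0 = powersetCard n univ := by
  simp [avoiding]

theorem avoiding_succ (k : ℕ) :
    avoiding h n (k + 1) = {S ∈ avoiding h n k | ¬ column h n k ⊆ S} := by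
  ext S
  simp only [avoiding, mem_filter, Nat.lt_succ_iff_lt_or_eq, or_imp, forall_and,
    forall_eq, and_assoc]

theorem card_avoiding_succ_add (k : ℕ) :
    #(avoiding h n (k + 1)) + #{S ∈ avoiding h n k | column h n k ⊆ S} = #(avoiding h n k) := by
  rw [avoiding_succ, add_comm]
  exact card_filter_add_card_filter_not _

theorem exchange_mem {k : ℕ} {S R : Finset (Fin (h * n))} (hS : S ∈ avoiding h n (k + 1))
    (hR : R ⊆ S \ column h n k) (hRcard : #R = #(column h n k \ S)) :
    S \ R ∪ (column h n k \ S) ∈ {S ∈ avoiding h n k | column h n k ⊆ S} := by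
  simp only [avoiding, mem_filter, mem_powersetCard] at hS ⊢
  obtain ⟨⟨-, hScard⟩, hfree⟩ := hS
  have hRS : R ⊆ S := hR.trans sdiff_subset
  refine ⟨⟨⟨subset_univ _, ?_⟩, fun i hi hsub => hfree i (by omega) fun j hj => ?_⟩,
    fun j hj => ?_⟩
  · rw [card_union_of_disjoint (disjoint_sdiff.mono_left sdiff_subset), card_sdiff_of_subset hRS]
    have := card_le_card hRS
    omega
  · rcases mem_union.mp (hsub hj) with hj' | hj'
    · exact (mem_sdiff.mp hj').1
    · exact absurd (mem_sdiff.mp hj').1 (disjoint_left.mp (disjoint_column hi.ne) hj)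
  · by_cases hjS : j ∈ S
    · exact mem_union_left _ (mem_sdiff.mpr ⟨hjS, fun hjR => (mem_sdiff.mp (hR hjR)).2 hj⟩)
    · exact mem_union_right _ (mem_sdiff.mpr ⟨hj, hjS⟩)

theorem sub_one_mul_le_choose_two_sub_one_mul (hh : 0 < h) (hn : h + 1 ≤ n) :
    (h - 1) * n ≤ ((h + 1).choose 2 - 1) * (n + 1 - h) := by
  obtain ⟨g, rfl⟩ : ∃ g, h = g + 1 := ⟨h - 1, by omega⟩
  obtain ⟨e, rfl⟩ : ∃ e, n = g + 2 + e := ⟨n - g - 2, by omega⟩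
  have htwice : 2 * (g + 1 + 1).choose 2 = (g + 2) * (g + 1) := by
    rw [Nat.choose_two_right, Nat.mul_div_cancel' (Nat.even_mul_pred_self _).two_dvd]; rfl
  obtain ⟨v, hv⟩ := Nat.exists_eq_add_one.mpr (Nat.choose_pos (show 2 ≤ g + 1 + 1 by omega))
  rw [hv] at htwice ⊢
  rw [Nat.add_sub_cancel, show g + 2 + e + 1 - (g + 1) = e + 2 by omega, Nat.add_sub_cancel]
  nlinarith [Nat.zero_le (g * e), Nat.zero_le (g * g * e), congrArg (· * e) htwice]

theorem card_filter_card_column_sdiff_le (hh : 0 < h) (hn : h + 1 ≤ n) {k : ℕ} (hk : k < n)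
    (s : ℕ) :
    #{S ∈ avoiding h n (k + 1) | #(column h n k \ S) = s} ≤
      #{S ∈ avoiding h n k | column h n k ⊆ S} * (h.choose s * ((h + 1).choose 2 - 1) ^ s) := by
  have hK := card_column hh hk
  have hexchange := card_mul_choose_le_of_exchange (K := column h n k) (m := n) (r := n + s - h)
    (𝒜 := {S ∈ avoiding h n (k + 1) | #(column h n k \ S) = s})
    (ℬ := {S ∈ avoiding h n k | column h n k ⊆ S}) (fun S hS => ?_) (fun S hS => ?_)
    fun S hS R hR hRcard =>
      exchange_mem (mem_filter.mp hS).1 hR (by rw [hRcard, (mem_filter.mp hS).2])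
  · have hchoose : (h * n - n).choose s ≤ ((h + 1).choose 2 - 1) ^ s * (n + s - h).choose s :=
      Nat.choose_le_pow_mul_choose (by
        rw [← Nat.sub_one_mul, show n + s - h + 1 - s = n + 1 - h by omega]
        exact sub_one_mul_le_choose_two_sub_one_mul hh hn)
    rw [hK, Fintype.card_fin] at hexchange
    refine Nat.le_of_mul_le_mul_right (hexchange.trans ?_)
      (Nat.choose_pos (by omega : s ≤ n + s - h))
    calc _ ≤ #{S ∈ avoiding h n k | column h n k ⊆ S} *
          (h.choose s * (((h + 1).choose 2 - 1) ^ s * (n + s - h).choose s)) := by gcongr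
      _ = _ := by ring
  · simp only [avoiding, mem_filter, mem_powersetCard] at hS
    have := card_sdiff_add_card_inter S (column h n k)
    have := card_sdiff_add_card_inter (column h n k) S
    rw [inter_comm] at this
    omega
  · exact (mem_powersetCard.mp (mem_filter.mp (mem_filter.mp hS).1).1).2

theorem card_avoiding_succ_add_le (hh : 0 < h) (hn : h + 1 ≤ n) {k : ℕ} (hk : k < n) :
    #(avoiding h n (k + 1)) + #{S ∈ avoiding h n k | column h n k ⊆ S} ≤
      #{S ∈ avoiding h n k | column h n k ⊆ S} * (h + 1).choose 2 ^ h := by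
  set K := column h n k
  set B := {S ∈ avoiding h n k | K ⊆ S}
  have hK : #K = h := card_column hh hk
  have hfibers : #(avoiding h n (k + 1)) =
      ∑ s ∈ range (h + 1), #{S ∈ avoiding h n (k + 1) | #(K \ S) = s} :=
    card_eq_sum_card_fiberwise fun S _ => by
      simpa [Nat.lt_succ_iff, hK] using card_le_card (sdiff_subset (s := K) (t := S))
  have hfiber_zero : #{S ∈ avoiding h n (k + 1) | #(K \ S) = 0} = 0 := by
    rw [card_eq_zero, filter_eq_empty_iff]
    intro S hS hKS
    rw [avoiding_succ, mem_filter] at hS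
    exact hS.2 (sdiff_eq_empty_iff_subset.mp (card_eq_zero.mp hKS))
  have hw : (h + 1).choose 2 = (h + 1).choose 2 - 1 + 1 :=
    (Nat.sub_add_cancel (Nat.choose_pos (by omega))).symm
  calc #(avoiding h n (k + 1)) + #B
      ≤ ∑ s ∈ range h, #B * (h.choose (s + 1) * ((h + 1).choose 2 - 1) ^ (s + 1)) + #B := by
        rw [hfibers, sum_range_succ', hfiber_zero, add_zero]
        gcongr with s
        exact card_filter_card_column_sdiff_le hh hn hk (s + 1)
    _ = #B * (h + 1).choose 2 ^ h := by
        rw [← mul_sum, ← mul_add_one, Nat.sum_range_choose_succ_mul_pow_add_one, ← hw]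

theorem two_div_mul_add_one_le_one (hh : 0 < h) : 2 / ((h : ℝ) * (h + 1)) ≤ 1 := by
  have : (1 : ℝ) ≤ h := by exact_mod_cast hh
  exact (div_le_one (by positivity)).mpr (by nlinarith)

theorem card_avoiding_succ_le (hh : 0 < h) (hn : h + 1 ≤ n) {k : ℕ} (hk : k < n) :
    (#(avoiding h n (k + 1)) : ℝ) ≤ (1 - (2 / (h * (h + 1))) ^ h) * #(avoiding h n k) := by
  have hw : ((h + 1).choose 2 : ℝ) = h * (h + 1) / 2 := by
    rw [Nat.cast_choose_two]; push_cast; ring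
  have hstep : (#(avoiding h n (k + 1)) + #{S ∈ avoiding h n k | column h n k ⊆ S} : ℝ) ≤
      #{S ∈ avoiding h n k | column h n k ⊆ S} * (h * (h + 1) / 2) ^ h := by
    rw [← hw]
    exact_mod_cast card_avoiding_succ_add_le hh hn hk
  rw [← card_avoiding_succ_add k, Nat.cast_add, ← one_div_div, one_div_pow, sub_mul, one_mul,
    one_div_mul_eq_div]
  linarith [(div_le_iff₀ (by positivity)).mpr hstep]

theorem card_avoiding_le (hh : 0 < h) (hn : h + 1 ≤ n) :
    (#(avoiding h n n) : ℝ) ≤ (1 - (2 / (h * (h + 1))) ^ h) ^ n * (h * n).choose n := by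
  have hρ := pow_le_one₀ (by positivity) (two_div_mul_add_one_le_one hh) (n := h)
  simpa [avoiding_zero] using le_geom (u := fun k => (#(avoiding h n k) : ℝ))
    (sub_nonneg.mpr hρ) n fun k hk => card_avoiding_succ_le hh hn hk

theorem noSpecialProb_eq (C : ℕ) (hh : 0 < h) :
    noSpecialProb h C = #(avoiding h (C + 1) (C + 1)) / (h * (C + 1)).choose (C + 1) := by
  have hcount : #{π : Equiv.Perm (Fin (h * (C + 1))) |
        ∀ i < C + 1, ¬ column h (C + 1) i ⊆ π⁻¹ • topLabels h (C + 1)} *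
      (h * (C + 1)).choose (C + 1) = #(avoiding h (C + 1) (C + 1)) * (h * (C + 1)).factorial := by
    have := Equiv.Perm.card_filter_inv_smul_finset_mul_choose (topLabels h (C + 1))
      fun S => ∀ i < C + 1, ¬ column h (C + 1) i ⊆ S
    rwa [card_topLabels hh, Fintype.card_fin] at this
  have hspecial : ∀ π : Equiv.Perm (Fin (h * (C + 1))),
      (∀ i : Fin (C + 1), ¬ ∀ j : Fin (h * (C + 1)), (j : ℕ) / h = (i : ℕ) →
        (h - 1) * (C + 1) + 1 ≤ (π j : ℕ) + 1) ↔
      ∀ i < C + 1, ¬ column h (C + 1) i ⊆ π⁻¹ • topLabels h (C + 1) := by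
    intro π
    simp [Fin.forall_iff, subset_iff, mem_column, mem_inv_smul_finset_iff, topLabels]
  have hchoose : 0 < (h * (C + 1)).choose (C + 1) := Nat.choose_pos (Nat.le_mul_of_pos_left _ hh)
  rw [noSpecialProb, filter_congr fun π _ => hspecial π,
    div_eq_div_iff (by positivity) (by exact_mod_cast hchoose.ne')]
  exact_mod_cast hcount

theorem noSpecialProb_le (C : ℕ) (hh : 0 < h) (hC : h ≤ C) :
    noSpecialProb h C ≤ (1 - (2 / (h * (h + 1))) ^ h) ^ (C + 1) := by
  have hρ := pow_le_one₀ (by positivity) (two_div_mul_add_one_le_one hh) (n := h)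
  rw [noSpecialProb_eq C hh]
  exact div_le_of_le_mul₀ (by positivity) (pow_nonneg (sub_nonneg.mpr hρ) _)
    (card_avoiding_le hh (by omega))

end Bay

/-- the probability that a uniformly random bay with `C+1` columns and
`h` containers per column has no special column is at most `exp(-θ(C+1))` with
`θ = (1/(8h)) (2/(h(h+1)))^(2h)`, provided `C ≥ h+1`. -/
theorem stmt13 (h C : ℕ) (hh : 1 ≤ h) (hC : h + 1 ≤ C) :
    noSpecialProb h C ≤
      Real.exp (-((1 / (8 * (h : ℝ))) * (2 / ((h : ℝ) * ((h : ℝ) + 1))) ^ (2 * h)) *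
        ((C : ℝ) + 1)) := by
  set ρ : ℝ := 2 / (h * (h + 1))
  have hρ₁ : ρ ≤ 1 := Bay.two_div_mul_add_one_le_one hh
  have hθ : 1 / (8 * (h : ℝ)) * ρ ^ (2 * h) ≤ ρ ^ h :=
    (mul_le_of_le_one_left (by positivity)
      ((div_le_one (by positivity)).mpr (by norm_cast; omega))).trans
      (pow_le_pow_of_le_one (by positivity) hρ₁ (by omega))
  calc noSpecialProb h C
      ≤ (1 - ρ ^ h) ^ (C + 1) := Bay.noSpecialProb_le C hh (by omega)
    _ ≤ Real.exp (-ρ ^ h) ^ (C + 1) :=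
        pow_le_pow_left₀ (sub_nonneg.mpr (pow_le_one₀ (by positivity) hρ₁))
          (Real.one_sub_le_exp_neg _) _
    _ = Real.exp (-ρ ^ h * (C + 1)) := by rw [← Real.exp_nat_mul]; push_cast; ring_nf
    _ ≤ _ := by gcongr
end

section
/- Let z_opt(B_C) be the optimal number of relocations of a uniformly random bay B_C with C columns, h containers per column (h <= P-1 tiers filled). If the sequence E_C[z_opt(B_C)] satisfies E_{C+1}[z_opt(B_{C+1})] <= E_C[z_opt(B_C)] + alpha_h + h(P-1)(C+1) e^{-theta(C+1)} for all C >= h+1 (with theta > 0 constant), then there is a constant K such that for all C >= h+1: 1 <= E_C[z_opt(B_C)] / E_C[S_0(B_C)] <= 1 + K/C, and hence the ratio converges to 1 as C tends to infinity. -/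
/-- let `Ez C = E_C[z_opt(B_C)]` be the expected optimal number of
relocations for a uniformly random bay with `C` columns and `h` containers per column
(`h ≤ P-1`), and suppose `E_C[S_0(B_C)] = α_h C` with `α_h > 0` and
`α_h C ≤ Ez C` (since `S_0 ≤ z_opt` pointwise).  If
`Ez(C+1) ≤ Ez(C) + α_h + h(P-1)(C+1)e^{-θ(C+1)}` for all `C ≥ h+1` (with `θ > 0`),
then there is a constant `K` such that for all `C ≥ h+1`:
`1 ≤ Ez C/(α_h C) ≤ 1 + K/C`; hence the ratio tends to `1` as `C → ∞`. -/
theorem stmt15 (Ez : ℕ → ℝ) (alpha θ : ℝ) (h P : ℕ)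
    (hhP : h + 1 ≤ P) (halpha : 0 < alpha) (hθ : 0 < θ)
    (hlb : ∀ C : ℕ, 1 ≤ C → alpha * (C : ℝ) ≤ Ez C)
    (hrec : ∀ C : ℕ, h + 1 ≤ C →
      Ez (C + 1) ≤ Ez C + alpha +
        (h : ℝ) * ((P : ℝ) - 1) * ((C : ℝ) + 1) * Real.exp (-θ * ((C : ℝ) + 1))) :
    ∃ K : ℝ, (∀ C : ℕ, h + 1 ≤ C →
        1 ≤ Ez C / (alpha * (C : ℝ)) ∧ Ez C / (alpha * (C : ℝ)) ≤ 1 + K / (C : ℝ)) ∧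
      Filter.Tendsto (fun C : ℕ => Ez C / (alpha * (C : ℝ))) Filter.atTop (nhds 1) := by
  set r : ℝ := Real.exp (-(θ/2)) with hrdef
  have hr0 : 0 < r := Real.exp_pos _
  have hr1 : r < 1 := Real.exp_lt_one_iff.mpr (by linarith)
  have hP1 : (1:ℝ) ≤ (P:ℝ) := by exact_mod_cast Nat.one_le_of_lt (Nat.lt_of_lt_of_le (Nat.lt_succ_self h) hhP)
  set A : ℝ := (h : ℝ) * ((P : ℝ) - 1) * (2/θ) with hAdef
  have hA0 : 0 ≤ A := by
    apply mul_nonneg (mul_nonneg (Nat.cast_nonneg h) (by linarith)) (by positivity)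
  -- error term bound
  have herr : ∀ C : ℕ,
      (h : ℝ) * ((P : ℝ) - 1) * ((C : ℝ) + 1) * Real.exp (-θ * ((C : ℝ) + 1))
        ≤ A * r ^ (C + 1) := by
    intro C
    have hx : (0:ℝ) ≤ (C : ℝ) + 1 := by positivity
    have hrpow : r ^ (C + 1) = Real.exp (-(θ/2) * ((C:ℝ) + 1)) := by
      rw [hrdef, ← Real.exp_nat_mul]
      push_cast; ring_nf
    have hsplit : Real.exp (-θ * ((C : ℝ) + 1))
        = Real.exp (-(θ/2) * ((C:ℝ)+1)) * Real.exp (-(θ/2) * ((C:ℝ)+1)) := by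
      rw [← Real.exp_add]; ring_nf
    have key : ((C : ℝ) + 1) * Real.exp (-(θ/2) * ((C:ℝ)+1)) ≤ 2/θ := by
      have h1 : (θ/2) * ((C:ℝ)+1) ≤ Real.exp ((θ/2) * ((C:ℝ)+1)) := by
        have := Real.add_one_le_exp ((θ/2) * ((C:ℝ)+1))
        linarith
      rw [neg_mul, Real.exp_neg]
      rw [mul_inv_le_iff₀ (Real.exp_pos _)]
      rw [div_mul_eq_mul_div, le_div_iff₀ hθ]
      nlinarith [h1]
    calc (h : ℝ) * ((P : ℝ) - 1) * ((C : ℝ) + 1) * Real.exp (-θ * ((C : ℝ) + 1))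
        = (h : ℝ) * ((P : ℝ) - 1) *
            ((((C : ℝ) + 1) * Real.exp (-(θ/2) * ((C:ℝ)+1))) * Real.exp (-(θ/2) * ((C:ℝ)+1))) := by
          rw [hsplit]; ring
      _ ≤ (h : ℝ) * ((P : ℝ) - 1) * ((2/θ) * Real.exp (-(θ/2) * ((C:ℝ)+1))) := by
          apply mul_le_mul_of_nonneg_left _ (mul_nonneg (Nat.cast_nonneg h) (by linarith))
          exact mul_le_mul_of_nonneg_right key (Real.exp_pos _).le
      _ = A * r ^ (C + 1) := by rw [hrpow, hAdef]; ring
  set E : ℝ := A / (1 - r) with hEdef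
  have hE0 : 0 ≤ E := div_nonneg hA0 (by linarith)
  set g0 : ℝ := Ez (h + 1) - alpha * ((h:ℝ) + 1) with hg0def
  have hg00 : 0 ≤ g0 := by
    have := hlb (h + 1) (by omega)
    push_cast at this ⊢
    linarith
  set K' : ℝ := g0 + E with hK'def
  -- main induction
  have main : ∀ C : ℕ, h + 1 ≤ C → Ez C ≤ alpha * (C:ℝ) + g0 + E * (r ^ (h+1) - r ^ C) := by
    intro C hC
    induction C, hC using Nat.le_induction with
    | base => push_cast; simp; linarith
    | succ C hC ih =>
      have step := hrec C hC
      have err := herr C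
      have absorb : A * r ^ (C + 1) ≤ E * (r ^ C - r ^ (C + 1)) := by
        have hne : (1:ℝ) - r ≠ 0 := by linarith
        have hcanc := div_mul_cancel₀ A hne
        have h1 : E * (r ^ C - r ^ (C + 1)) = A * r ^ C := by
          calc E * (r ^ C - r ^ (C + 1)) = (A / (1 - r) * (1 - r)) * r ^ C := by
                rw [hEdef]; ring
            _ = A * r ^ C := by rw [hcanc]
        rw [h1]
        have : r ^ (C + 1) ≤ r ^ C := by
          apply pow_le_pow_of_le_one hr0.le hr1.le (by omega)
        exact mul_le_mul_of_nonneg_left this hA0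
      push_cast
      push_cast at ih
      nlinarith [step, err, ih]
  have bound : ∀ C : ℕ, h + 1 ≤ C → Ez C ≤ alpha * (C:ℝ) + K' := by
    intro C hC
    have := main C hC
    have h1 : E * (r ^ (h+1) - r ^ C) ≤ E := by
      have : r ^ (h+1) - r ^ C ≤ 1 := by
        have := pow_le_one₀ hr0.le hr1.le (n := h+1)
        have := pow_nonneg hr0.le C
        linarith
      nlinarith
    rw [hK'def]; linarith
  refine ⟨K' / alpha, ?_, ?_⟩
  · intro C hC
    have hCpos : (0:ℝ) < (C:ℝ) := by exact_mod_cast Nat.lt_of_lt_of_le (Nat.zero_lt_succ h) hC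
    have hdpos : 0 < alpha * (C:ℝ) := by positivity
    constructor
    · rw [le_div_iff₀ hdpos, one_mul]
      exact hlb C (by omega)
    · rw [div_le_iff₀ hdpos]
      have := bound C hC
      have hexp : (1 + K' / alpha / (C:ℝ)) * (alpha * (C:ℝ)) = alpha * (C:ℝ) + K' := by
        field_simp
      rw [hexp]; exact this
  · have hub : Filter.Tendsto (fun C : ℕ => 1 + K' / alpha / (C:ℝ)) Filter.atTop (nhds 1) := by
      have := tendsto_const_div_atTop_nhds_zero_nat (K' / alpha)
      have h2 := Filter.Tendsto.add (tendsto_const_nhds (x := (1:ℝ)) (f := Filter.atTop (α := ℕ))) this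
      simpa using h2
    apply tendsto_of_tendsto_of_tendsto_of_le_of_le' tendsto_const_nhds hub
    · filter_upwards [Filter.eventually_ge_atTop (h+1)] with C hC
      exact (by
        have hCpos : (0:ℝ) < (C:ℝ) := by exact_mod_cast Nat.lt_of_lt_of_le (Nat.zero_lt_succ h) hC
        have hdpos : 0 < alpha * (C:ℝ) := by positivity
        rw [le_div_iff₀ hdpos, one_mul]
        exact hlb C (by omega))
    · filter_upwards [Filter.eventually_ge_atTop (h+1)] with C hC
      have hCpos : (0:ℝ) < (C:ℝ) := by exact_mod_cast Nat.lt_of_lt_of_le (Nat.zero_lt_succ h) hC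
      have hdpos : 0 < alpha * (C:ℝ) := by positivity
      rw [div_le_iff₀ hdpos]
      have := bound C hC
      have hexp : (1 + K' / alpha / (C:ℝ)) * (alpha * (C:ℝ)) = alpha * (C:ℝ) + K' := by
        field_simp
      rw [hexp]; exact this
end
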